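/- arXiv:2310.07543 — 2 statements merged into one kernel-verified Lean document; each statement's English description precedes it below -/
import Mathlib

section
/- Let D be a dis-similarity function on three points x, y, z (D is positive on distinct pairs, zero only on equal pairs, not assumed symmetric). Suppose D(x,y) ≤ D(x,z), D(z,x) ≤ D(z,y), and D(y,z) < D(y,x). Then there is no symmetric distance d (d(u,v) ≥ 0, d(u,v) = 0 iff u = v, d(u,v) = d(v,u)) on {x,y,z} that is pointwise compatible with D, i.e. such that for every reference r and comparisons u, v among the three points, D(r,u) < D(r,v) iff d(r,u) < d(r,v). -/
theorem no_symmetric_distance_of_one_sided_triplet_general {α : Type*} (x y z : α)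
    (D : α → α → ℝ)
    (h1 : D x y ≤ D x z) (h2 : D z x ≤ D z y) (h3 : D y z < D y x) :
    ¬ ∃ d : α → α → ℝ,
      (∀ u ∈ ({x, y, z} : Set α), ∀ v ∈ ({x, y, z} : Set α), 0 ≤ d u v) ∧
      (∀ u ∈ ({x, y, z} : Set α), ∀ v ∈ ({x, y, z} : Set α), (d u v = 0 ↔ u = v)) ∧
      (∀ u ∈ ({x, y, z} : Set α), ∀ v ∈ ({x, y, z} : Set α), d u v = d v u) ∧
      (∀ r ∈ ({x, y, z} : Set α), ∀ u ∈ ({x, y, z} : Set α), ∀ v ∈ ({x, y, z} : Set α),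
        (D r u < D r v ↔ d r u < d r v)) := by
  rintro ⟨d, -, -, hsym, hcomp⟩
  have hx : x ∈ ({x, y, z} : Set α) := by simp
  have hy : y ∈ ({x, y, z} : Set α) := by simp
  have hz : z ∈ ({x, y, z} : Set α) := by simp
  have c1 : d x y ≤ d x z := (le_iff_le_iff_lt_iff_lt.mpr (hcomp x hx z hz y hy)).mp h1
  have c2 : d z x ≤ d z y := (le_iff_le_iff_lt_iff_lt.mpr (hcomp z hz y hy x hx)).mp h2
  have c3 : d y z < d y x := (hcomp y hy z hz x hx).mp h3
  -- By symmetry these close up into the cycle d(x,y) ≤ d(x,z) ≤ d(y,z) < d(x,y).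
  linarith [hsym y hy x hx, hsym x hx z hz, hsym z hz y hy]

/-- If D(x,y) ≤ D(x,z), D(z,x) ≤ D(z,y), and D(y,z) < D(y,x) for a
dis-similarity D on three distinct points, then no symmetric distance on {x,y,z}
is pointwise compatible with D. -/
theorem no_symmetric_distance_of_one_sided_triplet {α : Type*} (x y z : α)
    (hxy : x ≠ y) (hyz : y ≠ z) (hxz : x ≠ z)
    (D : α → α → ℝ)
    (hD0 : ∀ u ∈ ({x, y, z} : Set α), ∀ v ∈ ({x, y, z} : Set α), 0 ≤ D u v)
    (hDeq : ∀ u ∈ ({x, y, z} : Set α), ∀ v ∈ ({x, y, z} : Set α), (D u v = 0 ↔ u = v))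
    (h1 : D x y ≤ D x z) (h2 : D z x ≤ D z y) (h3 : D y z < D y x) :
    ¬ ∃ d : α → α → ℝ,
      (∀ u ∈ ({x, y, z} : Set α), ∀ v ∈ ({x, y, z} : Set α), 0 ≤ d u v) ∧
      (∀ u ∈ ({x, y, z} : Set α), ∀ v ∈ ({x, y, z} : Set α), (d u v = 0 ↔ u = v)) ∧
      (∀ u ∈ ({x, y, z} : Set α), ∀ v ∈ ({x, y, z} : Set α), d u v = d v u) ∧
      (∀ r ∈ ({x, y, z} : Set α), ∀ u ∈ ({x, y, z} : Set α), ∀ v ∈ ({x, y, z} : Set α),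
        (D r u < D r v ↔ d r u < d r v)) :=
  no_symmetric_distance_of_one_sided_triplet_general x y z D h1 h2 h3
end

section
/- Let D be a dis-similarity on four distinct points with all six pairwise dis-similarity values distinct, D symmetric. Suppose D(z,c) is the largest value, and D(z,c) + D(a,b) is NOT the largest of the three pairsums D(z,c)+D(a,b), D(z,a)+D(b,c), D(z,b)+D(a,c). Let M be the largest pairsum and define F(u) = u + k for u ≥ D(z,c) and F(u) = u for u < D(z,c), where k is chosen so that, after applying F, the two largest pairsums are equal (that is, k = M − (D(z,c)+D(a,b))). Then F is strictly increasing on the range of D, and d = F ∘ D satisfies the four-point condition on the four points. -/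
/-- Case A of Proposition 4: if D(z,c) is the largest of the six
distinct symmetric dis-similarities and D(z,c)+D(a,b) is not the largest
pairsum, then shifting the top value by k = (largest pairsum) − (D(z,c)+D(a,b))
gives a strictly increasing transform F of the range of D such that d = F ∘ D
satisfies the four-point condition on {z,a,b,c}. -/
theorem shift_transform_gives_four_point {α : Type*} (z a b c : α)
    (hza : z ≠ a) (hzb : z ≠ b) (hzc : z ≠ c)
    (hab : a ≠ b) (hac : a ≠ c) (hbc : b ≠ c)
    (D : α → α → ℝ)
    (hD0 : ∀ u ∈ ({z, a, b, c} : Set α), ∀ v ∈ ({z, a, b, c} : Set α), 0 ≤ D u v)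
    (hDeq : ∀ u ∈ ({z, a, b, c} : Set α), ∀ v ∈ ({z, a, b, c} : Set α), (D u v = 0 ↔ u = v))
    (hDsym : ∀ u ∈ ({z, a, b, c} : Set α), ∀ v ∈ ({z, a, b, c} : Set α), D u v = D v u)
    (hdistinct : List.Pairwise (· ≠ ·) [D z a, D z b, D z c, D a b, D a c, D b c])
    (hmax : D z a < D z c ∧ D z b < D z c ∧ D a b < D z c ∧ D a c < D z c ∧ D b c < D z c)
    (hpair : D z c + D a b < max (D z a + D b c) (D z b + D a c)) :
    let k : ℝ := max (D z a + D b c) (D z b + D a c) - (D z c + D a b)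
    let F : ℝ → ℝ := fun u => if D z c ≤ u then u + k else u
    let d : α → α → ℝ := fun p q => F (D p q)
    (∀ p ∈ ({z, a, b, c} : Set α), ∀ q ∈ ({z, a, b, c} : Set α),
      ∀ p' ∈ ({z, a, b, c} : Set α), ∀ q' ∈ ({z, a, b, c} : Set α),
        D p q < D p' q' → d p q < d p' q') ∧
    ¬ (d z a + d b c < d z c + d a b ∧ d z b + d a c < d z c + d a b) ∧
    ¬ (d z c + d a b < d z a + d b c ∧ d z b + d a c < d z a + d b c) ∧
    ¬ (d z c + d a b < d z b + d a c ∧ d z a + d b c < d z b + d a c) := by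

  obtain ⟨h1, h2, h3, h4, h5⟩ := hmax
  intro k F d
  have hk : 0 < k := by simp only [k]; linarith
  have hFmono : ∀ u v : ℝ, u < v → F u < F v := by
    intro u v huv
    simp only [F]
    by_cases hu : D z c ≤ u
    · rw [if_pos hu, if_pos (le_trans hu huv.le)]; linarith
    · rw [if_neg hu]
      by_cases hv : D z c ≤ v
      · rw [if_pos hv]; linarith
      · rw [if_neg hv]; exact huv
  refine ⟨fun p _ q _ p' _ q' _ h => hFmono _ _ h, ?_, ?_, ?_⟩ <;>
  · simp only [d, F, if_pos (le_refl (D z c)), if_neg (not_le.mpr h1),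
      if_neg (not_le.mpr h2), if_neg (not_le.mpr h3), if_neg (not_le.mpr h4),
      if_neg (not_le.mpr h5), k]
    rcases max_cases (D z a + D b c) (D z b + D a c) with ⟨he, _⟩ | ⟨he, _⟩ <;>
      rw [he] <;> intro hcon <;> obtain ⟨g1, g2⟩ := hcon <;> linarith
end
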